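/- arXiv:2504.12912 — 3 statements merged into one kernel-verified Lean document; each statement's English description precedes it below -/
import Mathlib

section
/- With a, b, E, F, D, h as defined, the following hold: (i) D > 0; (ii) h(x,T) = 0 whenever |x| = 1; (iii) for every x with |x| = 1 the map t ↦ h(x,t) is strictly increasing on [0,T], since ∂_t h(x,t) = (E(x,t)/D)·(t+a)^{−2}·(K|x|² − b(t+a)) and b(T+a) = K / log(8/δ²) < K; consequently h(x,t) ≤ 0 for all |x| = 1 and t ∈ [0,T]; (iv) h(x,0) = 0 whenever |x| = δ/2, and h(x,0) ≤ 0 whenever |x| ≥ δ/2; (v) h(0,0) = 1 and h(x,0) ≤ 1 for all x ∈ ℝⁿ. -/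
open MeasureTheory Metric Set Real

noncomputable section

abbrev En (n : ℕ) := EuclideanSpace ℝ (Fin n)

/-- `a = δ²T/(8 - δ²)`, equivalently `(T+a)/(4a) = 2/δ²`. -/
def aC (T δ : ℝ) : ℝ := δ ^ 2 * T / (8 - δ ^ 2)

/-- `b = K / ((T+a) log(1 + T/a))`. -/
def bC (K T δ : ℝ) : ℝ := K / ((T + aC T δ) * Real.log (1 + T / aC T δ))

/-- `E(x,t) = (t+a)^{-b} exp(-K|x|²/(t+a))`. -/
def Efun (n : ℕ) (K T δ : ℝ) (x : En n) (t : ℝ) : ℝ :=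
  (t + aC T δ) ^ (-(bC K T δ)) * Real.exp (-(K * ‖x‖ ^ 2 / (t + aC T δ)))

/-- `F = (T+a)^{-b} exp(-K/(T+a))`. -/
def Fc (K T δ : ℝ) : ℝ :=
  (T + aC T δ) ^ (-(bC K T δ)) * Real.exp (-(K / (T + aC T δ)))

/-- `D = a^{-b} - F`. -/
def Dc (K T δ : ℝ) : ℝ := (aC T δ) ^ (-(bC K T δ)) - Fc K T δ

/-- `h(x,t) = (E(x,t) - F)/D`. -/
def hFun (n : ℕ) (K T δ : ℝ) (x : En n) (t : ℝ) : ℝ :=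
  (Efun n K T δ x t - Fc K T δ) / Dc K T δ

-- ===== auxiliary lemmas =====

lemma aux_a_pos {T δ : ℝ} (hT : 0 < T) (hδ : 0 < δ) (hδ1 : δ < 1) : 0 < aC T δ := by
  have h8 : 0 < 8 - δ ^ 2 := by nlinarith
  exact div_pos (by positivity) h8

lemma aux_one_add {T δ : ℝ} (hT : 0 < T) (hδ : 0 < δ) (hδ1 : δ < 1) :
    1 + T / aC T δ = 8 / δ ^ 2 := by
  have h8 : (8 : ℝ) - δ ^ 2 ≠ 0 := by nlinarith
  unfold aC; field_simp; ring

lemma aux_log_gt_one {δ : ℝ} (hδ : 0 < δ) (hδ1 : δ < 1) : 1 < Real.log (8 / δ ^ 2) := by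
  have h1 : (8:ℝ)/1 < 8 / δ ^ 2 :=
    div_lt_div_of_pos_left (by norm_num) (by positivity) (by nlinarith)
  rw [show (1:ℝ) = Real.log (Real.exp 1) by simp]
  apply Real.log_lt_log (Real.exp_pos 1)
  have := Real.exp_one_lt_d9
  linarith

lemma aux_b_eq {K T δ : ℝ} (hT : 0 < T) (hδ : 0 < δ) (hδ1 : δ < 1) :
    bC K T δ = K / ((T + aC T δ) * Real.log (8 / δ ^ 2)) := by
  rw [bC, aux_one_add hT hδ hδ1]

lemma aux_b_pos {K T δ : ℝ} (hK : 1 < K) (hT : 0 < T) (hδ : 0 < δ) (hδ1 : δ < 1) :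
    0 < bC K T δ := by
  rw [aux_b_eq hT hδ hδ1]
  have hA := aux_a_pos hT hδ hδ1
  have hL := aux_log_gt_one hδ hδ1
  apply div_pos (by linarith)
  apply mul_pos (by linarith) (by linarith)

lemma aux_bTA {K T δ : ℝ} (hK : 1 < K) (hT : 0 < T) (hδ : 0 < δ) (hδ1 : δ < 1) :
    bC K T δ * (T + aC T δ) = K / Real.log (8 / δ ^ 2) := by
  rw [aux_b_eq hT hδ hδ1]
  have hA := aux_a_pos hT hδ hδ1
  have hL := aux_log_gt_one hδ hδ1
  have hTA : (T + aC T δ) ≠ 0 := by linarith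
  have hL0 : Real.log (8 / δ ^ 2) ≠ 0 := by linarith
  field_simp

lemma aux_blog {K T δ : ℝ} (hK : 1 < K) (hT : 0 < T) (hδ : 0 < δ) (hδ1 : δ < 1) :
    bC K T δ * Real.log (8 / δ ^ 2) = K / (T + aC T δ) := by
  rw [aux_b_eq hT hδ hδ1]
  have hA := aux_a_pos hT hδ hδ1
  have hL := aux_log_gt_one hδ hδ1
  have hTA : (T + aC T δ) ≠ 0 := by linarith
  have hL0 : Real.log (8 / δ ^ 2) ≠ 0 := by linarith
  field_simp

/-- key rpow identity: `a^{-b} = (T+a)^{-b} e^{K/(T+a)}`. -/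
lemma aux_rpow {K T δ : ℝ} (hK : 1 < K) (hT : 0 < T) (hδ : 0 < δ) (hδ1 : δ < 1) :
    (aC T δ) ^ (-(bC K T δ)) =
      (T + aC T δ) ^ (-(bC K T δ)) * Real.exp (K / (T + aC T δ)) := by
  have hA := aux_a_pos hT hδ hδ1
  have hTA : 0 < T + aC T δ := by linarith
  have hlogdiv : Real.log (T + aC T δ) - Real.log (aC T δ) = Real.log (8 / δ ^ 2) := by
    rw [← Real.log_div hTA.ne' hA.ne']
    congr 1
    rw [← aux_one_add hT hδ hδ1]
    field_simp
    ring
  rw [Real.rpow_def_of_pos hA, Real.rpow_def_of_pos hTA, ← Real.exp_add]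
  congr 1
  have hb := aux_blog hK hT hδ hδ1
  linear_combination hb + bC K T δ * hlogdiv

/-- `δ²/(4a) = 2/(T+a)` in the form needed. -/
lemma aux_quarter {K T δ : ℝ} (hK : 1 < K) (hT : 0 < T) (hδ : 0 < δ) (hδ1 : δ < 1) :
    K * (δ / 2) ^ 2 / aC T δ = 2 * K / (T + aC T δ) := by
  have h8 : (0:ℝ) < 8 - δ ^ 2 := by nlinarith
  have hA := aux_a_pos hT hδ hδ1
  have hTA : 0 < T + aC T δ := by linarith
  rw [div_eq_div_iff hA.ne' hTA.ne']
  unfold aC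
  field_simp
  ring

lemma aux_F_eq {K T δ : ℝ} (hK : 1 < K) (hT : 0 < T) (hδ : 0 < δ) (hδ1 : δ < 1) :
    (aC T δ) ^ (-(bC K T δ)) * Real.exp (-(K * (δ / 2) ^ 2 / aC T δ)) = Fc K T δ := by
  rw [Fc, aux_rpow hK hT hδ hδ1, aux_quarter hK hT hδ hδ1, mul_assoc, ← Real.exp_add]
  congr 2
  ring

lemma aux_E_half {n : ℕ} {K T δ : ℝ} (hK : 1 < K) (hT : 0 < T) (hδ : 0 < δ) (hδ1 : δ < 1)
    (x : En n) (hx : ‖x‖ = δ / 2) : Efun n K T δ x 0 = Fc K T δ := by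
  rw [Efun, hx, zero_add, aux_F_eq hK hT hδ hδ1]

lemma aux_Dpos {K T δ : ℝ} (hK : 1 < K) (hT : 0 < T) (hδ : 0 < δ) (hδ1 : δ < 1) :
    0 < Dc K T δ := by
  have hA := aux_a_pos hT hδ hδ1
  have hTA : 0 < T + aC T δ := by linarith
  rw [Dc, aux_rpow hK hT hδ hδ1, Fc, sub_pos]
  apply mul_lt_mul_of_pos_left _ (Real.rpow_pos_of_pos hTA _)
  apply Real.exp_lt_exp.2
  have : 0 < K / (T + aC T δ) := div_pos (by linarith) hTA
  linarith

lemma aux_hasDerivAt_E {n : ℕ} (K T δ : ℝ) (x : En n) (t : ℝ) (ht : 0 < t + aC T δ) :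
    HasDerivAt (fun s => Efun n K T δ x s)
      (Efun n K T δ x t / (t + aC T δ) ^ 2 * (K * ‖x‖ ^ 2 - bC K T δ * (t + aC T δ))) t := by
  set A := aC T δ
  set B := bC K T δ
  set c := K * ‖x‖ ^ 2 with hc
  have h1 : HasDerivAt (fun s : ℝ => s + A) 1 t := (hasDerivAt_id t).add_const A
  have h2 : HasDerivAt (fun s : ℝ => (s + A) ^ (-B)) (1 * (-B) * (t + A) ^ (-B - 1)) t :=
    h1.rpow_const (Or.inl ht.ne')
  have h3 : HasDerivAt (fun s : ℝ => (s + A)⁻¹) (-1 / (t + A) ^ 2) t := by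
    exact h1.inv ht.ne'
  have h4 : HasDerivAt (fun s : ℝ => -(c * (s + A)⁻¹)) (c / (t + A) ^ 2) t := by
    have h := (h3.const_mul c).neg
    refine h.congr_deriv ?_
    field_simp
  have h5 := h4.exp
  have h6 := h2.mul h5
  have hE : (fun s => Efun n K T δ x s)
      = fun s => (s + A) ^ (-B) * Real.exp (-(c * (s + A)⁻¹)) := by
    funext s; rw [Efun, div_eq_mul_inv]
  rw [hE]
  refine h6.congr_deriv ?_
  have hpow : (t + A) ^ (-B - 1) = (t + A) ^ (-B) / (t + A) := by
    rw [show -B - 1 = -B - 1 from rfl, Real.rpow_sub_one ht.ne']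
  rw [hpow, Efun]
  have h2t : (0:ℝ) < (t + A) ^ 2 := by positivity
  field_simp
  ring

/-- properties of the barrier `h` used in the parabolic
Hopf–Oleinik lemma. -/
theorem statement7 (n : ℕ) (hn : 1 ≤ n) (K T δ : ℝ) (hK : 1 < K) (hT : 0 < T)
    (hδ : 0 < δ) (hδ1 : δ < 1) :
    -- (i) `D > 0`
    (0 < Dc K T δ) ∧
    -- (ii) `h(x,T) = 0` for `|x| = 1`
    (∀ x : En n, ‖x‖ = 1 → hFun n K T δ x T = 0) ∧
    -- (iii) the formula for `∂ₜ h` ...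
    (∀ (x : En n), ∀ t ∈ Set.Icc (0:ℝ) T,
      HasDerivAt (fun s => hFun n K T δ x s)
        (Efun n K T δ x t / Dc K T δ / (t + aC T δ) ^ 2 *
          (K * ‖x‖ ^ 2 - bC K T δ * (t + aC T δ))) t) ∧
    -- ... the identity `b(T+a) = K / log(8/δ²)` and `K / log(8/δ²) < K` ...
    (bC K T δ * (T + aC T δ) = K / Real.log (8 / δ ^ 2)) ∧
    (K / Real.log (8 / δ ^ 2) < K) ∧
    -- ... strict monotonicity in time on `|x| = 1`, and consequently `h ≤ 0` there
    (∀ x : En n, ‖x‖ = 1 → StrictMonoOn (fun t => hFun n K T δ x t) (Set.Icc 0 T)) ∧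
    (∀ x : En n, ‖x‖ = 1 → ∀ t ∈ Set.Icc (0:ℝ) T, hFun n K T δ x t ≤ 0) ∧
    -- (iv) `h(x,0) = 0` for `|x| = δ/2` and `h(x,0) ≤ 0` for `|x| ≥ δ/2`
    (∀ x : En n, ‖x‖ = δ / 2 → hFun n K T δ x 0 = 0) ∧
    (∀ x : En n, δ / 2 ≤ ‖x‖ → hFun n K T δ x 0 ≤ 0) ∧
    -- (v) `h(0,0) = 1` and `h(x,0) ≤ 1` for all `x`
    (hFun n K T δ (0 : En n) 0 = 1) ∧
    (∀ x : En n, hFun n K T δ x 0 ≤ 1) := by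
  have hA := aux_a_pos hT hδ hδ1
  have hTA : 0 < T + aC T δ := by linarith
  have hD := aux_Dpos hK hT hδ hδ1
  have hB := aux_b_pos hK hT hδ hδ1
  have hL := aux_log_gt_one hδ hδ1
  -- (ii)
  have hii : ∀ x : En n, ‖x‖ = 1 → hFun n K T δ x T = 0 := by
    intro x hx
    rw [hFun, Efun, hx]
    norm_num [Fc]
  -- (iii) derivative
  have hiii : ∀ (x : En n), ∀ t, 0 ≤ t →
      HasDerivAt (fun s => hFun n K T δ x s)
        (Efun n K T δ x t / Dc K T δ / (t + aC T δ) ^ 2 *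
          (K * ‖x‖ ^ 2 - bC K T δ * (t + aC T δ))) t := by
    intro x t ht
    have htA : 0 < t + aC T δ := by linarith
    have hE := aux_hasDerivAt_E K T δ x t htA
    have h := (hE.sub_const (Fc K T δ)).div_const (Dc K T δ)
    refine h.congr_deriv ?_
    ring
  -- b(T+a) identity and < K
  have hbta := aux_bTA hK hT hδ hδ1
  have hltK : K / Real.log (8 / δ ^ 2) < K :=
    div_lt_self (by linarith) hL
  -- strict mono
  have hmono : ∀ x : En n, ‖x‖ = 1 → StrictMonoOn (fun t => hFun n K T δ x t) (Set.Icc 0 T) := by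
    intro x hx
    apply strictMonoOn_of_deriv_pos (convex_Icc 0 T)
    · intro t ht
      exact ((hiii x t ht.1).continuousAt).continuousWithinAt
    · intro t ht
      rw [interior_Icc] at ht
      rw [(hiii x t ht.1.le).deriv]
      have htA : 0 < t + aC T δ := by linarith [ht.1]
      have hEpos : 0 < Efun n K T δ x t := by
        rw [Efun]
        positivity
      apply mul_pos (by positivity)
      rw [hx]
      have h1 : bC K T δ * (t + aC T δ) < bC K T δ * (T + aC T δ) := by
        apply mul_lt_mul_of_pos_left _ hB
        linarith [ht.2]
      rw [hbta] at h1
      nlinarith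
  -- h ≤ 0 on |x| = 1
  have hle0 : ∀ x : En n, ‖x‖ = 1 → ∀ t ∈ Set.Icc (0:ℝ) T, hFun n K T δ x t ≤ 0 := by
    intro x hx t ht
    rcases eq_or_lt_of_le ht.2 with h | h
    · rw [h, hii x hx]
    · have h2 := hmono x hx ht (Set.right_mem_Icc.2 hT.le) h
      simp only [hii x hx] at h2
      exact h2.le
  -- (iv)
  have hiv1 : ∀ x : En n, ‖x‖ = δ / 2 → hFun n K T δ x 0 = 0 := by
    intro x hx
    rw [hFun, aux_E_half hK hT hδ hδ1 x hx, sub_self, zero_div]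
  have hiv2 : ∀ x : En n, δ / 2 ≤ ‖x‖ → hFun n K T δ x 0 ≤ 0 := by
    intro x hx
    rw [hFun]
    apply div_nonpos_of_nonpos_of_nonneg _ hD.le
    rw [sub_nonpos]
    rw [← aux_F_eq hK hT hδ hδ1, Efun, zero_add]
    apply mul_le_mul_of_nonneg_left _ (Real.rpow_pos_of_pos hA _).le
    apply Real.exp_le_exp.2
    rw [neg_le_neg_iff]
    have hsq : (δ / 2) ^ 2 ≤ ‖x‖ ^ 2 := by nlinarith [norm_nonneg x]
    apply div_le_div_of_nonneg_right ?_ hA.le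
    nlinarith
  -- (v)
  have hv1 : hFun n K T δ (0 : En n) 0 = 1 := by
    have hE0 : Efun n K T δ (0 : En n) 0 = (aC T δ) ^ (-(bC K T δ)) := by
      rw [Efun]; simp
    rw [hFun, hE0,
      show (aC T δ) ^ (-(bC K T δ)) - Fc K T δ = Dc K T δ from rfl, div_self hD.ne']
  have hv2 : ∀ x : En n, hFun n K T δ x 0 ≤ 1 := by
    intro x
    rw [hFun, div_le_one hD, Dc]
    have : Efun n K T δ x 0 ≤ (aC T δ) ^ (-(bC K T δ)) := by
      rw [Efun, zero_add]
      nth_rewrite 2 [← mul_one ((aC T δ) ^ (-(bC K T δ)))]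
      apply mul_le_mul_of_nonneg_left _ (Real.rpow_pos_of_pos hA _).le
      apply Real.exp_le_one_iff.2
      have : 0 ≤ K * ‖x‖ ^ 2 / aC T δ := by positivity
      linarith
    linarith
  exact ⟨hD, hii, fun x t ht => hiii x t ht.1, hbta, hltK, hmono, hle0, hiv1, hiv2, hv1, hv2⟩
end
end

section
/- With a, b, E, F, D, h as defined, for every (x,t) ∈ B₁ × (0,T] the spatial Hessian of h satisfies D²h(x,t) = (E(x,t)/D)·(2K/(t+a)²)·(2K·x xᵀ − (t+a)·I), and ∂_t h(x,t) − M_K⁻(D²h(x,t)) ≤ (E(x,t)/(D(t+a)²))·(−3K|x|² + (t+a)(2nK² − b)). In particular, if b > 2nK², then there exists κ > 0 (depending only on n, K, δ and T) such that ∂_t h − M_K⁻(D²h) ≤ −κ everywhere in B₁ × (0,T]. -/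
open MeasureTheory Metric Set Real

noncomputable section

def PucciSet (n : ℕ) (K : ℝ) : Set (Matrix (Fin n) (Fin n) ℝ) :=
  {A | A.IsSymm ∧ (A - K⁻¹ • (1 : Matrix (Fin n) (Fin n) ℝ)).PosSemidef ∧
    ((K • (1 : Matrix (Fin n) (Fin n) ℝ)) - A).PosSemidef}

/-- Pucci minimal operator `M_K⁻`. -/
def PucciMinus (n : ℕ) (K : ℝ) (N : Matrix (Fin n) (Fin n) ℝ) : ℝ :=
  sInf ((fun A => (A * N).trace) '' PucciSet n K)

/-- spatial Hessian matrix -/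
def hessian (n : ℕ) (φ : En n → ℝ) (x : En n) : Matrix (Fin n) (Fin n) ℝ :=
  fun i j => fderiv ℝ (fun y => fderiv ℝ φ y (EuclideanSpace.single j (1:ℝ))) x
    (EuclideanSpace.single i (1:ℝ))

/-! ### Auxiliary lemmas -/

lemma hasDerivAt_expaux (K s r : ℝ) :
    HasDerivAt (fun r : ℝ => Real.exp (-(K * r / s)))
      (Real.exp (-(K * r / s)) * (-(K/s))) r := by
  have h0 : (fun r : ℝ => Real.exp (-(K * r / s))) = fun r : ℝ => Real.exp ((-(K/s)) * r) := by
    funext r; ring_nf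
  rw [h0]
  have := (((hasDerivAt_id r).const_mul (-(K/s)))).exp
  simp only [id_eq] at this
  convert this using 1
  ring_nf

lemma hasFDerivAt_phi (n : ℕ) (K s : ℝ) (x : En n) :
    HasFDerivAt (fun y : En n => Real.exp (-(K * ‖y‖^2 / s)))
      ((Real.exp (-(K * ‖x‖^2 / s)) * (-(K/s))) • (2 • (innerSL ℝ x))) x := by
  have h1 : HasFDerivAt (fun y : En n => ‖y‖^2) (2 • (innerSL ℝ x)) x :=
    (hasStrictFDerivAt_norm_sq x).hasFDerivAt
  exact (hasDerivAt_expaux K s (‖x‖^2)).comp_hasFDerivAt x h1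

lemma fderiv_psi (n : ℕ) (K s c₀ F D : ℝ) (x : En n) :
    HasFDerivAt (fun y : En n => (c₀ * Real.exp (-(K * ‖y‖^2 / s)) - F) / D)
      ((c₀ / D * Real.exp (-(K * ‖x‖^2 / s)) * (-(K/s))) • (2 • (innerSL ℝ x))) x := by
  have h0 : (fun y : En n => (c₀ * Real.exp (-(K * ‖y‖^2 / s)) - F) / D)
      = fun y : En n => D⁻¹ * (c₀ * Real.exp (-(K * ‖y‖^2 / s)) - F) := by
    funext y; rw [div_eq_inv_mul]
  rw [h0]
  have := (((hasFDerivAt_phi n K s x).const_mul c₀).sub_const F).const_mul D⁻¹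
  refine this.congr_fderiv ?_
  ext v
  simp only [ContinuousLinearMap.coe_smul', Pi.smul_apply, smul_eq_mul]
  ring

lemma fderiv_psi_apply (n : ℕ) (K s c₀ F D : ℝ) (y : En n) (j : Fin n) :
    fderiv ℝ (fun y : En n => (c₀ * Real.exp (-(K * ‖y‖^2 / s)) - F) / D) y
        (EuclideanSpace.single j (1:ℝ)) =
      (2 * (c₀ / D * (-(K/s)))) * (Real.exp (-(K * ‖y‖^2 / s)) * y j) := by
  rw [(fderiv_psi n K s c₀ F D y).fderiv]
  simp [EuclideanSpace.inner_single_right]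
  ring

lemma hessian_psi (n : ℕ) (K s c₀ F D : ℝ) (hs : s ≠ 0) (x : En n) (i j : Fin n) :
    hessian n (fun y : En n => (c₀ * Real.exp (-(K * ‖y‖^2 / s)) - F) / D) x i j =
      c₀ * Real.exp (-(K * ‖x‖^2 / s)) / D * (2*K/s^2) *
        (2*K*(x i * x j) - s * (if i = j then 1 else 0)) := by
  show fderiv ℝ (fun y : En n => fderiv ℝ _ y (EuclideanSpace.single j (1:ℝ))) x
    (EuclideanSpace.single i (1:ℝ)) = _
  have h0 : (fun y : En n => fderiv ℝ
        (fun y : En n => (c₀ * Real.exp (-(K * ‖y‖^2 / s)) - F) / D) y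
        (EuclideanSpace.single j (1:ℝ)))
      = fun y : En n => (2 * (c₀ / D * (-(K/s)))) * (Real.exp (-(K * ‖y‖^2 / s)) * y j) :=
    funext fun y => fderiv_psi_apply n K s c₀ F D y j
  rw [h0]
  have hproj : HasFDerivAt (fun y : En n => (y j : ℝ)) (EuclideanSpace.proj (𝕜 := ℝ) j) x :=
    (EuclideanSpace.proj (𝕜 := ℝ) j).hasFDerivAt
  have h1 := ((hasFDerivAt_phi n K s x).mul hproj).const_mul (2 * (c₀ / D * (-(K/s))))
  rw [(show HasFDerivAt (fun y : En n => 2 * (c₀ / D * (-(K/s))) * (Real.exp (-(K * ‖y‖^2 / s)) * y j)) _ x from h1).fderiv]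
  simp only [ContinuousLinearMap.coe_smul', Pi.smul_apply, ContinuousLinearMap.add_apply,
    smul_eq_mul, ContinuousLinearMap.coe_add', PiLp.proj_apply,
    EuclideanSpace.single_apply, EuclideanSpace.inner_single_right,
    ContinuousLinearMap.smul_apply, innerSL_apply_apply, conj_trivial]
  rcases eq_or_ne i j with h | h
  · subst h; simp only [if_pos rfl]; field_simp; ring
  · simp only [if_neg h, if_neg (Ne.symm h)]; field_simp; ring

lemma hasDerivAt_time (K a b r F D : ℝ) (t : ℝ) (ht : 0 < t + a) :
    HasDerivAt (fun u : ℝ => (((u+a) ^ (-b) : ℝ) * Real.exp (-(K * r / (u+a))) - F) / D)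
      (((t+a) ^ (-b) * Real.exp (-(K * r / (t+a))) / D) * ((-b)/(t+a) + K*r/(t+a)^2)) t := by
  have h1 : HasDerivAt (fun u : ℝ => u + a) 1 t := (hasDerivAt_id t).add_const a
  have h2 : HasDerivAt (fun u : ℝ => ((u+a) ^ (-b) : ℝ)) (1 * (-b) * (t+a) ^ (-b-1)) t :=
    h1.rpow_const (Or.inl ht.ne')
  have h3 : HasDerivAt (fun u : ℝ => (u+a)⁻¹) (-1/(t+a)^2) t := by
    exact h1.inv ht.ne'
  have h4 : (fun u : ℝ => Real.exp (-(K * r / (u+a))))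
      = fun u : ℝ => Real.exp (-(K * r * (u+a)⁻¹)) := by
    funext u; rw [div_eq_mul_inv]
  have h5 : HasDerivAt (fun u : ℝ => Real.exp (-(K * r / (u+a))))
      (Real.exp (-(K * r * (t+a)⁻¹)) * (-(K * r * (-1/(t+a)^2)))) t := by
    rw [h4]; exact ((h3.const_mul (K*r)).neg).exp
  have h6 := ((h2.mul h5).sub_const F).div_const D
  refine h6.congr_deriv ?_
  have hba : (t+a) ^ (-b-1) = (t+a) ^ (-b) * (t+a)⁻¹ := by
    rw [show -b-1 = -b + (-1) by ring, Real.rpow_add ht, Real.rpow_neg_one]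
  have he : -(K * r / (t + a)) = -(K * r * (t+a)⁻¹) := by rw [div_eq_mul_inv]
  rw [hba, he]
  ring

lemma one_mem_PucciSet (n : ℕ) (K : ℝ) (hK : 1 < K) :
    (1 : Matrix (Fin n) (Fin n) ℝ) ∈ PucciSet n K := by
  have h1 : (1 : Matrix (Fin n) (Fin n) ℝ) - K⁻¹ • 1 = Matrix.diagonal (fun _ => 1 - K⁻¹) := by
    rw [Matrix.smul_one_eq_diagonal, ← Matrix.diagonal_one, Matrix.diagonal_sub]
  have h2 : K • (1 : Matrix (Fin n) (Fin n) ℝ) - 1 = Matrix.diagonal (fun _ => K - 1) := by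
    rw [Matrix.smul_one_eq_diagonal, ← Matrix.diagonal_one, Matrix.diagonal_sub]
  refine ⟨Matrix.isSymm_one, ?_, ?_⟩
  · rw [h1]
    refine Matrix.PosSemidef.diagonal fun i => ?_
    have : K⁻¹ ≤ 1 := by
      rw [inv_le_one_iff₀]; right; exact hK.le
    simp only [Pi.zero_apply]; linarith
  · rw [h2]
    refine Matrix.PosSemidef.diagonal fun i => ?_
    simp only [Pi.zero_apply]; linarith

lemma trace_mul_vecMulVec (n : ℕ) (A : Matrix (Fin n) (Fin n) ℝ) (u v : Fin n → ℝ) :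
    (A * Matrix.vecMulVec u v).trace = dotProduct v (A.mulVec u) := by
  simp only [Matrix.trace, Matrix.diag, Matrix.mul_apply, Matrix.vecMulVec_apply,
    dotProduct, Matrix.mulVec, Finset.mul_sum]
  refine Finset.sum_congr rfl fun i _ => Finset.sum_congr rfl fun j _ => by ring

lemma norm_sq_eq_dot (n : ℕ) (x : En n) :
    dotProduct (fun i => x i) (fun i => x i) = ‖x‖^2 := by
  rw [← real_inner_self_eq_norm_sq]
  simp only [dotProduct, PiLp.inner_apply, RCLike.inner_apply, conj_trivial]

lemma quad_lb (n : ℕ) (K : ℝ) (A : Matrix (Fin n) (Fin n) ℝ) (hA : A ∈ PucciSet n K)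
    (x : En n) :
    K⁻¹ * ‖x‖^2 ≤ dotProduct (fun i => x i) (A.mulVec (fun i => x i)) := by
  have h := (Matrix.posSemidef_iff_dotProduct_mulVec.mp hA.2.1).2 (fun i => x i)
  simp only [star_trivial, Matrix.sub_mulVec, Matrix.smul_mulVec, Matrix.one_mulVec,
    dotProduct_sub, dotProduct_smul, smul_eq_mul] at h
  rw [norm_sq_eq_dot] at h
  linarith

lemma trace_ub (n : ℕ) (K : ℝ) (A : Matrix (Fin n) (Fin n) ℝ) (hA : A ∈ PucciSet n K) :
    A.trace ≤ n * K := by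
  have hdiag : ∀ i, A i i ≤ K := by
    intro i
    have h := (Matrix.posSemidef_iff_dotProduct_mulVec.mp hA.2.2).2 (Pi.single i 1)
    simp only [star_trivial, Matrix.sub_mulVec, Matrix.smul_mulVec, Matrix.one_mulVec,
      dotProduct_sub, dotProduct_smul, smul_eq_mul] at h
    have h1 : dotProduct (Pi.single i (1:ℝ)) (Pi.single i (1:ℝ)) = 1 := by
      simp [dotProduct, Pi.single_apply]
    have h2 : dotProduct (Pi.single i (1:ℝ)) (A.mulVec (Pi.single i 1)) = A i i := by
      simp [dotProduct, Matrix.mulVec, Pi.single_apply]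
    rw [h1, h2] at h
    linarith
  calc A.trace = ∑ i, A i i := rfl
    _ ≤ ∑ _i : Fin n, K := Finset.sum_le_sum fun i _ => hdiag i
    _ = n * K := by simp [mul_comm]

lemma pucci_lb (n : ℕ) (K : ℝ) (hK : 1 < K) (x : En n) (μ s : ℝ) (hμ : 0 ≤ μ) (hs : 0 < s) :
    μ * (2 * ‖x‖^2 - n * K * s) ≤
      PucciMinus n K (μ • ((2*K) • Matrix.vecMulVec (fun i => x i) (fun i => x i) -
        s • (1 : Matrix (Fin n) (Fin n) ℝ))) := by
  refine le_csInf ⟨_, ⟨1, one_mem_PucciSet n K hK, rfl⟩⟩ ?_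
  rintro w ⟨A, hA, rfl⟩
  have htr : (A * (μ • ((2*K) • Matrix.vecMulVec (fun i => x i) (fun i => x i) -
      s • (1 : Matrix (Fin n) (Fin n) ℝ)))).trace =
      μ * (2*K * dotProduct (fun i => x i) (A.mulVec (fun i => x i)) - s * A.trace) := by
    rw [Matrix.mul_smul, Matrix.trace_smul, Matrix.mul_sub, Matrix.mul_smul, Matrix.mul_smul,
      Matrix.mul_one, Matrix.trace_sub, Matrix.trace_smul, Matrix.trace_smul,
      trace_mul_vecMulVec]
    simp only [smul_eq_mul]
  show μ * (2 * ‖x‖^2 - n * K * s) ≤ (A * (μ • ((2*K) • Matrix.vecMulVec (fun i => x i)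
    (fun i => x i) - s • (1 : Matrix (Fin n) (Fin n) ℝ)))).trace
  rw [htr]
  have hq := quad_lb n K A hA x
  have ht := trace_ub n K A hA
  have hKpos : (0:ℝ) < K := lt_trans one_pos hK
  have hKK : K * K⁻¹ = 1 := mul_inv_cancel₀ hKpos.ne'
  refine mul_le_mul_of_nonneg_left ?_ hμ
  have h1 : 2 * ‖x‖^2 ≤ 2 * K * dotProduct (fun i => x i) (A.mulVec (fun i => x i)) := by
    have := mul_le_mul_of_nonneg_left hq (by linarith : (0:ℝ) ≤ 2*K)
    calc 2 * ‖x‖^2 = 2 * K * (K⁻¹ * ‖x‖^2) := by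
          field_simp
      _ ≤ _ := this
  have h2 : s * A.trace ≤ s * (n * K) := mul_le_mul_of_nonneg_left ht hs.le
  linarith

lemma aC_pos (T δ : ℝ) (hT : 0 < T) (hδ : 0 < δ) (hδ1 : δ < 1) : 0 < aC T δ := by
  have h1 : 0 < δ ^ 2 := by positivity
  have h2 : δ ^ 2 < 1 := by nlinarith
  have : 0 < 8 - δ ^ 2 := by linarith
  exact div_pos (by nlinarith) this

lemma bC_pos (K T δ : ℝ) (hK : 1 < K) (hT : 0 < T) (hδ : 0 < δ) (hδ1 : δ < 1) :
    0 < bC K T δ := by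
  have ha := aC_pos T δ hT hδ hδ1
  have hTa : 0 < T + aC T δ := by linarith
  have hlog : 0 < Real.log (1 + T / aC T δ) := by
    apply Real.log_pos
    have : 0 < T / aC T δ := div_pos hT ha
    linarith
  exact div_pos (by linarith) (mul_pos hTa hlog)

lemma Dc_pos (K T δ : ℝ) (hK : 1 < K) (hT : 0 < T) (hδ : 0 < δ) (hδ1 : δ < 1) :
    0 < Dc K T δ := by
  have ha := aC_pos T δ hT hδ hδ1
  have hTa : 0 < T + aC T δ := by linarith
  have hb := bC_pos K T δ hK hT hδ hδ1
  have h1 : Fc K T δ < (T + aC T δ) ^ (-(bC K T δ)) := by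
    have hexp : Real.exp (-(K / (T + aC T δ))) < 1 := by
      apply Real.exp_lt_one_iff.mpr
      have : 0 < K / (T + aC T δ) := div_pos (by linarith) hTa
      linarith
    have hpos : (0:ℝ) < (T + aC T δ) ^ (-(bC K T δ)) := Real.rpow_pos_of_pos hTa _
    calc Fc K T δ = (T + aC T δ) ^ (-(bC K T δ)) * Real.exp (-(K / (T + aC T δ))) := rfl
      _ < (T + aC T δ) ^ (-(bC K T δ)) * 1 := by
          exact mul_lt_mul_of_pos_left hexp hpos
      _ = _ := mul_one _
  have h2 : (T + aC T δ) ^ (-(bC K T δ)) < (aC T δ) ^ (-(bC K T δ)) :=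
    Real.rpow_lt_rpow_of_neg ha (by linarith) (by linarith)
  have : Fc K T δ < (aC T δ) ^ (-(bC K T δ)) := lt_trans h1 h2
  simp only [Dc]
  linarith

set_option maxHeartbeats 2000000 in
/-- the barrier `h` is a strict supersolution:
Hessian formula and Pucci estimate. -/
theorem statement8 (n : ℕ) (hn : 1 ≤ n) (K T δ : ℝ) (hK : 1 < K) (hT : 0 < T)
    (hδ : 0 < δ) (hδ1 : δ < 1) :
    (∀ (x : En n), ∀ t : ℝ, x ∈ Metric.ball (0 : En n) 1 → t ∈ Set.Ioc (0:ℝ) T →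
      hessian n (fun y => hFun n K T δ y t) x =
        (Efun n K T δ x t / Dc K T δ * (2 * K / (t + aC T δ) ^ 2)) •
          ((2 * K) • Matrix.vecMulVec (fun i => x i) (fun i => x i) -
            (t + aC T δ) • (1 : Matrix (Fin n) (Fin n) ℝ)) ∧
      deriv (fun s => hFun n K T δ x s) t -
          PucciMinus n K (hessian n (fun y => hFun n K T δ y t) x) ≤
        Efun n K T δ x t / (Dc K T δ * (t + aC T δ) ^ 2) *
          (-(3 * K * ‖x‖ ^ 2) + (t + aC T δ) * (2 * n * K ^ 2 - bC K T δ))) ∧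
    (2 * n * K ^ 2 < bC K T δ →
      ∃ κ : ℝ, 0 < κ ∧
        ∀ (x : En n), ∀ t : ℝ, x ∈ Metric.ball (0 : En n) 1 → t ∈ Set.Ioc (0:ℝ) T →
          deriv (fun s => hFun n K T δ x s) t -
            PucciMinus n K (hessian n (fun y => hFun n K T δ y t) x) ≤ -κ) := by
  have hKpos : (0:ℝ) < K := by linarith
  have ha : 0 < aC T δ := aC_pos T δ hT hδ hδ1
  have hTa : 0 < T + aC T δ := by linarith
  have hb : 0 < bC K T δ := bC_pos K T δ hK hT hδ hδ1
  have hD : 0 < Dc K T δ := Dc_pos K T δ hK hT hδ hδ1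
  have main : ∀ (x : En n), ∀ t : ℝ, x ∈ Metric.ball (0 : En n) 1 → t ∈ Set.Ioc (0:ℝ) T →
      hessian n (fun y => hFun n K T δ y t) x =
        (Efun n K T δ x t / Dc K T δ * (2 * K / (t + aC T δ) ^ 2)) •
          ((2 * K) • Matrix.vecMulVec (fun i => x i) (fun i => x i) -
            (t + aC T δ) • (1 : Matrix (Fin n) (Fin n) ℝ)) ∧
      deriv (fun s => hFun n K T δ x s) t -
          PucciMinus n K (hessian n (fun y => hFun n K T δ y t) x) ≤
        Efun n K T δ x t / (Dc K T δ * (t + aC T δ) ^ 2) *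
          (-(3 * K * ‖x‖ ^ 2) + (t + aC T δ) * (2 * n * K ^ 2 - bC K T δ)) := by
    intro x t hx ht
    obtain ⟨ht0, htT⟩ := ht
    have hs : 0 < t + aC T δ := by linarith
    have hE : 0 < Efun n K T δ x t :=
      mul_pos (Real.rpow_pos_of_pos hs _) (Real.exp_pos _)
    have hfun_eq : (fun y : En n => hFun n K T δ y t) = fun y : En n =>
        (((t + aC T δ) ^ (-(bC K T δ)) : ℝ) *
          Real.exp (-(K * ‖y‖^2 / (t + aC T δ))) - Fc K T δ) / Dc K T δ := rfl
    have hhess : hessian n (fun y => hFun n K T δ y t) x =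
        (Efun n K T δ x t / Dc K T δ * (2 * K / (t + aC T δ) ^ 2)) •
          ((2 * K) • Matrix.vecMulVec (fun i => x i) (fun i => x i) -
            (t + aC T δ) • (1 : Matrix (Fin n) (Fin n) ℝ)) := by
      ext i j
      rw [hfun_eq, hessian_psi n K (t + aC T δ) _ _ _ hs.ne' x i j]
      simp only [Matrix.smul_apply, Matrix.sub_apply, Matrix.vecMulVec_apply,
        Matrix.one_apply, smul_eq_mul, Efun]
    refine ⟨hhess, ?_⟩
    have hderiv : deriv (fun u => hFun n K T δ x u) t =
        (Efun n K T δ x t / Dc K T δ) *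
          ((-(bC K T δ))/(t + aC T δ) + K * ‖x‖^2/(t + aC T δ)^2) := by
      have h0 : (fun u : ℝ => hFun n K T δ x u) = fun u : ℝ =>
          (((u + aC T δ) ^ (-(bC K T δ)) : ℝ) *
            Real.exp (-(K * ‖x‖^2 / (u + aC T δ))) - Fc K T δ) / Dc K T δ := rfl
      rw [h0, (hasDerivAt_time K (aC T δ) (bC K T δ) (‖x‖^2) (Fc K T δ) (Dc K T δ) t hs).deriv]
      simp only [Efun]
    have hμ : 0 ≤ Efun n K T δ x t / Dc K T δ * (2 * K / (t + aC T δ) ^ 2) := by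
      have : 0 ≤ Efun n K T δ x t / Dc K T δ := (div_pos hE hD).le
      have h2 : 0 ≤ 2 * K / (t + aC T δ) ^ 2 := by positivity
      exact mul_nonneg this h2
    have hP := pucci_lb n K hK x (Efun n K T δ x t / Dc K T δ * (2 * K / (t + aC T δ) ^ 2))
      (t + aC T δ) hμ hs
    rw [hhess, hderiv]
    have key : (Efun n K T δ x t / Dc K T δ) *
          ((-(bC K T δ))/(t + aC T δ) + K * ‖x‖^2/(t + aC T δ)^2) -
        (Efun n K T δ x t / Dc K T δ * (2 * K / (t + aC T δ) ^ 2)) *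
          (2 * ‖x‖^2 - n * K * (t + aC T δ)) =
        Efun n K T δ x t / (Dc K T δ * (t + aC T δ) ^ 2) *
          (-(3 * K * ‖x‖ ^ 2) + (t + aC T δ) * (2 * n * K ^ 2 - bC K T δ)) := by
      field_simp
      ring
    linarith [hP]
  refine ⟨main, ?_⟩
  intro hbig
  set m : ℝ := (T + aC T δ) ^ (-(bC K T δ)) * Real.exp (-(K / aC T δ)) with hm_def
  have hm : 0 < m := mul_pos (Real.rpow_pos_of_pos hTa _) (Real.exp_pos _)
  refine ⟨(bC K T δ - 2 * n * K ^ 2) * m / (Dc K T δ * (T + aC T δ)), ?_, ?_⟩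
  · apply div_pos (mul_pos (by linarith) hm) (mul_pos hD hTa)
  · intro x t hx ht
    have ht0 := ht.1
    have htT := ht.2
    have hs : 0 < t + aC T δ := by linarith
    have hE : 0 < Efun n K T δ x t :=
      mul_pos (Real.rpow_pos_of_pos hs _) (Real.exp_pos _)
    have hineq := (main x t hx ht).2
    have hr : ‖x‖ ^ 2 ≤ 1 := by
      have hx1 : ‖x‖ < 1 := mem_ball_zero_iff.mp hx
      nlinarith [norm_nonneg x]
    have hr0 : (0:ℝ) ≤ ‖x‖ ^ 2 := by positivity
    -- step A
    have hcoef : 0 ≤ Efun n K T δ x t / (Dc K T δ * (t + aC T δ) ^ 2) :=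
      (div_pos hE (mul_pos hD (by positivity))).le
    have stepA : Efun n K T δ x t / (Dc K T δ * (t + aC T δ) ^ 2) *
          (-(3 * K * ‖x‖ ^ 2) + (t + aC T δ) * (2 * n * K ^ 2 - bC K T δ)) ≤
        Efun n K T δ x t / (Dc K T δ * (t + aC T δ) ^ 2) *
          ((t + aC T δ) * (2 * n * K ^ 2 - bC K T δ)) := by
      apply mul_le_mul_of_nonneg_left _ hcoef
      nlinarith
    -- step B
    have stepB : Efun n K T δ x t / (Dc K T δ * (t + aC T δ) ^ 2) *
          ((t + aC T δ) * (2 * n * K ^ 2 - bC K T δ)) =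
        -(Efun n K T δ x t / (Dc K T δ * (t + aC T δ)) * (bC K T δ - 2 * n * K ^ 2)) := by
      field_simp
      ring
    -- step C
    have hE1 : (T + aC T δ) ^ (-(bC K T δ)) ≤ (t + aC T δ) ^ (-(bC K T δ)) :=
      Real.rpow_le_rpow_of_nonpos hs (by linarith) (by linarith)
    have hE2 : Real.exp (-(K / aC T δ)) ≤ Real.exp (-(K * ‖x‖^2 / (t + aC T δ))) := by
      apply Real.exp_le_exp.mpr
      have : K * ‖x‖^2 / (t + aC T δ) ≤ K / aC T δ := by
        apply div_le_div₀ hKpos.le (by nlinarith) ha (by linarith)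
      linarith
    have hmE : m ≤ Efun n K T δ x t := by
      rw [hm_def]
      exact mul_le_mul hE1 hE2 (Real.exp_pos _).le (Real.rpow_pos_of_pos hs _).le
    have hdiv : m / (Dc K T δ * (T + aC T δ)) ≤
        Efun n K T δ x t / (Dc K T δ * (t + aC T δ)) := by
      refine div_le_div₀ hE.le hmE (mul_pos hD hs) ?_
      exact mul_le_mul_of_nonneg_left (by linarith : t + aC T δ ≤ T + aC T δ) hD.le
    have stepC : (bC K T δ - 2 * n * K ^ 2) * m / (Dc K T δ * (T + aC T δ)) ≤
        Efun n K T δ x t / (Dc K T δ * (t + aC T δ)) * (bC K T δ - 2 * n * K ^ 2) := by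
      have h := mul_le_mul_of_nonneg_left hdiv (by linarith : (0:ℝ) ≤ bC K T δ - 2 * n * K ^ 2)
      calc (bC K T δ - 2 * n * K ^ 2) * m / (Dc K T δ * (T + aC T δ))
          = (bC K T δ - 2 * n * K ^ 2) * (m / (Dc K T δ * (T + aC T δ))) := by ring
        _ ≤ (bC K T δ - 2 * n * K ^ 2) *
            (Efun n K T δ x t / (Dc K T δ * (t + aC T δ))) := h
        _ = _ := by ring
    linarith
end
end

section
/- Let n ≥ 1, K > 1, 0 < λ ≤ 1 and C₀ > 0. Define g(s) = (1 − e^{−2ns})/(2n) for s ≥ 0 and g(s) = 0 for s < 0, r(t) = 1 − C₀λt, and w(x,t) = C₀ · g(|x| − r(t)). Then for every (x,t) with 1/2 ≤ r(t) < |x|, the function w is C² in space and C¹ in time near (x,t) and satisfies ∂_t w(x,t) − M_K⁻(D²w(x,t)) ≥ C₀ · g′(|x| − r(t)) · (C₀λ − 4nK). Moreover, if additionally |x| ≤ 2 and 0 ≤ t ≤ 1, then e^{−2n(1+C₀λ)} ≤ g′(|x| − r(t)) ≤ 1. -/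
open MeasureTheory Metric Set

noncomputable section

/-- `g(s) = (1 - e^{-2ns})/(2n)` for `s ≥ 0`, `g(s) = 0` for `s < 0`. -/
def gFun (n : ℕ) (s : ℝ) : ℝ :=
  if 0 ≤ s then (1 - Real.exp (-(2 * n * s))) / (2 * n) else 0

/-- `r(t) = 1 - C₀ λ t`. -/
def rFun (C₀ lam t : ℝ) : ℝ := 1 - C₀ * lam * t

/-- `w(x,t) = C₀ g(|x| - r(t))`. -/
def wFun (n : ℕ) (C₀ lam : ℝ) (x : En n) (t : ℝ) : ℝ :=
  C₀ * gFun n (‖x‖ - rFun C₀ lam t)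

/-! ### Auxiliary lemmas -/

open RealInnerProductSpace in
lemma hasFDerivAt_norm_eucl {n : ℕ} {x : En n} (hx : x ≠ 0) :
    HasFDerivAt (fun y : En n => ‖y‖) ((‖x‖⁻¹ : ℝ) • innerSL ℝ x) x := by
  have h1 : HasFDerivAt (fun y : En n => (⟪y, y⟫ : ℝ))
      ((fderivInnerCLM ℝ (x, x)).comp ((ContinuousLinearMap.id ℝ (En n)).prod
        (ContinuousLinearMap.id ℝ (En n)))) x :=
    (hasFDerivAt_id x).inner ℝ (hasFDerivAt_id x)
  have hnx : (0:ℝ) < ‖x‖ := norm_pos_iff.2 hx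
  have hq : (0:ℝ) < ⟪x, x⟫ := by
    rw [real_inner_self_eq_norm_mul_norm]; positivity
  have h2 : HasDerivAt Real.sqrt (1 / (2 * Real.sqrt ⟪x,x⟫)) ⟪x,x⟫ :=
    Real.hasDerivAt_sqrt hq.ne'
  have h3 := h2.comp_hasFDerivAt (f := fun y : En n => (⟪y, y⟫ : ℝ)) x h1
  have heq : (Real.sqrt ∘ fun y : En n => (⟪y, y⟫ : ℝ)) = fun y : En n => ‖y‖ := by
    funext y
    simp only [Function.comp_apply]
    rw [real_inner_self_eq_norm_mul_norm, Real.sqrt_mul_self (norm_nonneg y)]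
  rw [heq] at h3
  refine h3.congr_fderiv ?_
  ext v
  simp only [ContinuousLinearMap.smul_apply, ContinuousLinearMap.comp_apply,
    ContinuousLinearMap.prod_apply, ContinuousLinearMap.id_apply, fderivInnerCLM_apply,
    innerSL_apply_apply, smul_eq_mul]
  rw [real_inner_self_eq_norm_mul_norm, Real.sqrt_mul_self (norm_nonneg x),
    real_inner_comm v x]
  field_simp
  ring

lemma psd_smul_one {n : ℕ} {c : ℝ} (hc : 0 ≤ c) :
    (c • (1 : Matrix (Fin n) (Fin n) ℝ)).PosSemidef := by
  have : c • (1 : Matrix (Fin n) (Fin n) ℝ) = Matrix.diagonal (fun _ => c) := by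
    ext i j
    rcases eq_or_ne i j with rfl | h
    · simp
    · simp [Matrix.one_apply_ne h, Matrix.diagonal_apply_ne _ h]
  rw [this]
  exact Matrix.PosSemidef.diagonal (fun _ => hc)

lemma psd_add {n : ℕ} {A B : Matrix (Fin n) (Fin n) ℝ} (hA : A.PosSemidef)
    (hB : B.PosSemidef) : (A + B).PosSemidef := by
  exact hA.add hB

lemma quad_single {n : ℕ} (A : Matrix (Fin n) (Fin n) ℝ) (i : Fin n) :
    dotProduct (star (Pi.single i 1 : Fin n → ℝ)) (A.mulVec (Pi.single i 1)) = A i i := by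
  simp [dotProduct, Matrix.mulVec, Pi.single_apply]

lemma quad_two {n : ℕ} (A : Matrix (Fin n) (Fin n) ℝ) (i j : Fin n) (hij : i ≠ j) (c : ℝ) :
    dotProduct (star ((Pi.single i 1 + Pi.single j c) : Fin n → ℝ))
      (A.mulVec ((Pi.single i 1 + Pi.single j c) : Fin n → ℝ))
      = A i i + c * A i j + c * A j i + c ^ 2 * A j j := by
  simp [dotProduct, Matrix.mulVec_add, Matrix.mulVec, Pi.single_apply, mul_add, add_mul,
    Finset.sum_add_distrib, hij, hij.symm]
  ring

lemma pucci_entry_bound {n : ℕ} {K : ℝ} (hK : 1 < K) {A : Matrix (Fin n) (Fin n) ℝ}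
    (hA : A ∈ PucciSet n K) (i j : Fin n) : |A i j| ≤ K := by
  obtain ⟨hsymm, hlo, hhi⟩ := hA
  have hKpos : (0:ℝ) < K := lt_trans one_pos hK
  have hApsd : A.PosSemidef := by
    have := psd_add hlo (psd_smul_one (n := n) (by positivity : (0:ℝ) ≤ K⁻¹))
    simpa using this
  have hdiag : ∀ k, A k k ≤ K := by
    intro k
    have := hhi.dotProduct_mulVec_nonneg (Pi.single k 1)
    rw [quad_single] at this
    simp only [Matrix.sub_apply, Matrix.smul_apply, Matrix.one_apply_eq, smul_eq_mul,
      mul_one] at this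
    linarith
  have hdiag0 : ∀ k, 0 ≤ A k k := by
    intro k
    have := hApsd.dotProduct_mulVec_nonneg (Pi.single k 1)
    rwa [quad_single] at this
  rcases eq_or_ne i j with rfl | hij
  · rw [abs_le]; exact ⟨by linarith [hdiag0 i, hKpos.le], hdiag i⟩
  · have hsym' : A j i = A i j := by
      have := congrFun (congrFun hsymm j) i
      simpa [Matrix.transpose_apply] using this.symm
    have h1 := hApsd.dotProduct_mulVec_nonneg (Pi.single i 1 + Pi.single j 1)
    have h2 := hApsd.dotProduct_mulVec_nonneg (Pi.single i 1 + Pi.single j (-1))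
    rw [quad_two A i j hij 1] at h1
    rw [quad_two A i j hij (-1)] at h2
    rw [abs_le]
    constructor <;> nlinarith [hdiag i, hdiag j, hdiag0 i, hdiag0 j]

lemma pucciMinus_le {n : ℕ} {K : ℝ} (hK : 1 < K) (N : Matrix (Fin n) (Fin n) ℝ) :
    PucciMinus n K N ≤ K⁻¹ * N.trace := by
  have hKpos : (0:ℝ) < K := lt_trans one_pos hK
  have hmem : (K⁻¹ • (1 : Matrix (Fin n) (Fin n) ℝ)) ∈ PucciSet n K := by
    refine ⟨?_, by simpa using Matrix.PosSemidef.zero, ?_⟩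
    · simp [Matrix.IsSymm]
    · have : K • (1 : Matrix (Fin n) (Fin n) ℝ) - K⁻¹ • 1 = (K - K⁻¹) • 1 := by
        rw [sub_smul]
      rw [this]
      exact psd_smul_one (by
        have : K⁻¹ ≤ 1 := by rw [inv_le_one_iff₀]; right; exact hK.le
        linarith)
  have hbdd : BddBelow ((fun A => (A * N).trace) '' PucciSet n K) := by
    refine ⟨-(K * ∑ i, ∑ j, |N j i|), ?_⟩
    rintro v ⟨A, hA, rfl⟩
    show -(K * ∑ i, ∑ j, |N j i|) ≤ (A * N).trace
    have : (A * N).trace = ∑ i, ∑ j, A i j * N j i := by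
      simp [Matrix.trace, Matrix.mul_apply, Matrix.diag]
    rw [this]
    have : -(K * ∑ i, ∑ j, |N j i|) = ∑ i : Fin n, ∑ j : Fin n, -(K * |N j i|) := by
      push_cast [Finset.mul_sum, Finset.sum_neg_distrib]
      simp [Finset.mul_sum]
    rw [this]
    refine Finset.sum_le_sum fun i _ => Finset.sum_le_sum fun j _ => ?_
    have h1 : |A i j * N j i| ≤ K * |N j i| := by
      rw [abs_mul]
      exact mul_le_mul_of_nonneg_right (pucci_entry_bound hK hA i j) (abs_nonneg _)
    have := neg_abs_le (A i j * N j i)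
    linarith
  have := csInf_le hbdd ⟨_, hmem, rfl⟩
  calc PucciMinus n K N ≤ ((K⁻¹ • (1 : Matrix (Fin n) (Fin n) ℝ)) * N).trace := this
    _ = K⁻¹ * N.trace := by rw [Matrix.smul_mul, Matrix.one_mul, Matrix.trace_smul]; simp

def Gf (n : ℕ) : ℝ → ℝ := fun s => (1 - Real.exp (-(2 * n * s))) / (2 * n)

lemma hasDerivAt_Gf (n : ℕ) (hn : 1 ≤ n) (s : ℝ) :
    HasDerivAt (Gf n) (Real.exp (-(2 * n * s))) s := by
  have hn' : (0:ℝ) < (n:ℝ) := by exact_mod_cast hn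
  have h1 : HasDerivAt (fun u : ℝ => -(2 * (n:ℝ) * u)) (-(2 * n)) s := by
    simpa using ((hasDerivAt_id s).const_mul (2 * (n:ℝ))).fun_neg
  have h2 := h1.exp
  have h3 := ((hasDerivAt_const s (1:ℝ)).fun_sub h2).div_const (2 * (n:ℝ))
  refine h3.congr_deriv ?_
  field_simp
  ring

lemma gFun_eventuallyEq (n : ℕ) {s : ℝ} (hs : 0 < s) : gFun n =ᶠ[nhds s] Gf n := by
  filter_upwards [Ioi_mem_nhds hs] with u hu
  simp only [gFun, Gf, if_pos (le_of_lt (show 0 < u from hu))]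

lemma deriv_gFun (n : ℕ) (hn : 1 ≤ n) {s : ℝ} (hs : 0 < s) :
    deriv (gFun n) s = Real.exp (-(2 * n * s)) := by
  rw [(gFun_eventuallyEq n hs).deriv_eq]
  exact (hasDerivAt_Gf n hn s).deriv

lemma w_hasFDerivAt (n : ℕ) (hn : 1 ≤ n) (C₀ r : ℝ) (hr : 0 < r) {y : En n}
    (hy : r < ‖y‖) :
    HasFDerivAt (fun z : En n => C₀ * gFun n (‖z‖ - r))
      ((C₀ * Real.exp (-(2 * n * (‖y‖ - r))) * ‖y‖⁻¹) • innerSL ℝ y) y := by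
  have hy0 : y ≠ 0 := by
    intro h; rw [h, norm_zero] at hy; linarith
  have hsub : HasFDerivAt (fun z : En n => ‖z‖ - r) ((‖y‖⁻¹ : ℝ) • innerSL ℝ y) y :=
    (hasFDerivAt_norm_eucl hy0).sub_const r
  have hg := (hasDerivAt_Gf n hn (‖y‖ - r)).comp_hasFDerivAt
    (f := fun z : En n => ‖z‖ - r) y hsub
  have hmul := hg.const_mul C₀
  have heq : (fun z : En n => C₀ * gFun n (‖z‖ - r)) =ᶠ[nhds y]
      (fun z : En n => C₀ * (Gf n ∘ fun z : En n => ‖z‖ - r) z) := by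
    have hU : IsOpen {z : En n | r < ‖z‖} := isOpen_lt continuous_const continuous_norm
    filter_upwards [hU.mem_nhds hy] with z hz
    have hz' : (0:ℝ) ≤ ‖z‖ - r := by linarith
    simp [Function.comp_apply, gFun, Gf, hz']
  refine (hmul.congr_of_eventuallyEq heq).congr_fderiv ?_
  rw [smul_smul, smul_smul]

lemma hessian_diag (n : ℕ) (hn : 1 ≤ n) (C₀ r : ℝ) (hr : 0 < r) (x : En n)
    (hx : r < ‖x‖) (i : Fin n) :
    hessian n (fun y => C₀ * gFun n (‖y‖ - r)) x i i =
      C₀ * Real.exp (-(2 * n * (‖x‖ - r))) *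
        (‖x‖⁻¹ - 2 * n * (x i) ^ 2 * (‖x‖ ^ 2)⁻¹ - (x i) ^ 2 * (‖x‖ ^ 3)⁻¹) := by
  have hR : (0:ℝ) < ‖x‖ := lt_trans hr hx
  have hx0 : x ≠ 0 := by intro h; rw [h, norm_zero] at hR; exact lt_irrefl _ hR
  have hψ : (fun y : En n => fderiv ℝ (fun z : En n => C₀ * gFun n (‖z‖ - r)) y
        (EuclideanSpace.single i (1:ℝ))) =ᶠ[nhds x]
      (fun y : En n => C₀ * Real.exp (-(2 * n * (‖y‖ - r))) * ‖y‖⁻¹ * y i) := by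
    have hU : IsOpen {z : En n | r < ‖z‖} := isOpen_lt continuous_const continuous_norm
    filter_upwards [hU.mem_nhds hx] with y hy
    rw [(w_hasFDerivAt n hn C₀ r hr hy).fderiv]
    simp only [ContinuousLinearMap.smul_apply, innerSL_apply_apply, smul_eq_mul]
    rw [EuclideanSpace.inner_single_right]
    simp [mul_assoc]
  have hgoal : hessian n (fun y => C₀ * gFun n (‖y‖ - r)) x i i =
      fderiv ℝ (fun y : En n => C₀ * Real.exp (-(2 * n * (‖y‖ - r))) * ‖y‖⁻¹ * y i) x
        (EuclideanSpace.single i (1:ℝ)) := by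
    unfold hessian
    rw [hψ.fderiv_eq]
  rw [hgoal]
  have hnorm := hasFDerivAt_norm_eucl hx0
  have hsub : HasFDerivAt (fun z : En n => ‖z‖ - r) ((‖x‖⁻¹ : ℝ) • innerSL ℝ x) x :=
    hnorm.sub_const r
  have hexp : HasDerivAt (fun s : ℝ => Real.exp (-(2 * (n:ℝ) * s)))
      (Real.exp (-(2 * n * (‖x‖ - r))) * -(2 * n)) (‖x‖ - r) := by
    have h1 : HasDerivAt (fun u : ℝ => -(2 * (n:ℝ) * u)) (-(2 * (n:ℝ))) (‖x‖ - r) := by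
      simpa using ((hasDerivAt_id (‖x‖ - r)).const_mul (2 * (n:ℝ))).fun_neg
    simpa using h1.exp
  have h1 := (hexp.comp_hasFDerivAt (f := fun z : En n => ‖z‖ - r) x hsub).const_mul C₀
  have h2 := (hasDerivAt_inv hR.ne').comp_hasFDerivAt (f := fun z : En n => ‖z‖) x hnorm
  have h4 : HasFDerivAt (fun y : En n => y i)
      (innerSL ℝ (EuclideanSpace.single i (1:ℝ))) x := by
    refine (innerSL ℝ (EuclideanSpace.single i (1:ℝ))).hasFDerivAt.congr_of_eventuallyEq ?_
    filter_upwards with y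
    rw [innerSL_apply_apply, EuclideanSpace.inner_single_left]
    simp
  have h5 := (h1.fun_mul h2).fun_mul h4
  simp only [Function.comp_def] at h5
  rw [h5.fderiv]
  simp only [ContinuousLinearMap.add_apply, ContinuousLinearMap.smul_apply, innerSL_apply_apply,
    smul_eq_mul, EuclideanSpace.inner_single_left, EuclideanSpace.inner_single_right]
  simp only [map_one, one_mul, starRingEnd_apply, star_trivial, EuclideanSpace.single_apply,
    if_pos rfl, if_true]
  field_simp
  ring

lemma sum_sq_eucl {n : ℕ} (x : En n) : ∑ i, (x i) ^ 2 = ‖x‖ ^ 2 := by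
  have h := real_inner_self_eq_norm_sq x
  rw [PiLp.inner_apply] at h
  simp only [RCLike.inner_apply, starRingEnd_apply, star_trivial] at h
  calc ∑ i, (x i) ^ 2 = ∑ i, x i * x i := by simp [pow_two]
    _ = ‖x‖ ^ 2 := h

lemma trace_hessian {n : ℕ} (hn : 1 ≤ n) (C₀ r : ℝ) (hr : 0 < r) (x : En n)
    (hx : r < ‖x‖) :
    (hessian n (fun y => C₀ * gFun n (‖y‖ - r)) x).trace =
      C₀ * Real.exp (-(2 * n * (‖x‖ - r))) *
        ((n : ℝ) * ‖x‖⁻¹ - 2 * n - ‖x‖⁻¹) := by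
  have hR : (0:ℝ) < ‖x‖ := lt_trans hr hx
  simp only [Matrix.trace, Matrix.diag]
  rw [Finset.sum_congr rfl (fun i _ => hessian_diag n hn C₀ r hr x hx i)]
  rw [← Finset.mul_sum]
  congr 1
  have he : ∀ i : Fin n, ‖x‖⁻¹ - 2 * (n:ℝ) * (x i) ^ 2 * (‖x‖ ^ 2)⁻¹ - (x i) ^ 2 * (‖x‖ ^ 3)⁻¹
      = ‖x‖⁻¹ - (x i) ^ 2 * (2 * n * (‖x‖ ^ 2)⁻¹ + (‖x‖ ^ 3)⁻¹) := fun i => by ring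
  rw [Finset.sum_congr rfl (fun i _ => he i), Finset.sum_sub_distrib, ← Finset.sum_mul,
    sum_sq_eucl, Finset.sum_const, Finset.card_univ, Fintype.card_fin, nsmul_eq_mul]
  field_simp
  ring

/-- the travelling-wave barrier `w` is a supersolution away from its
free boundary. -/
theorem statement10 (n : ℕ) (hn : 1 ≤ n) (K lam C₀ : ℝ) (hK : 1 < K)
    (hlam : 0 < lam) (hlam1 : lam ≤ 1) (hC₀ : 0 < C₀)
    (x : En n) (t : ℝ) (h1 : 1 / 2 ≤ rFun C₀ lam t) (h2 : rFun C₀ lam t < ‖x‖) :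
    ContDiffAt ℝ 2 (fun y => wFun n C₀ lam y t) x ∧
    ContDiffAt ℝ 1 (fun s => wFun n C₀ lam x s) t ∧
    C₀ * deriv (gFun n) (‖x‖ - rFun C₀ lam t) * (C₀ * lam - 4 * n * K) ≤
      deriv (fun s => wFun n C₀ lam x s) t -
        PucciMinus n K (hessian n (fun y => wFun n C₀ lam y t) x) ∧
    (‖x‖ ≤ 2 → 0 ≤ t → t ≤ 1 →
      Real.exp (-(2 * n * (1 + C₀ * lam))) ≤ deriv (gFun n) (‖x‖ - rFun C₀ lam t) ∧
      deriv (gFun n) (‖x‖ - rFun C₀ lam t) ≤ 1) := by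
  have hn' : (1:ℝ) ≤ (n:ℝ) := by exact_mod_cast hn
  set r := rFun C₀ lam t with hrdef
  have hr0 : (0:ℝ) < r := by linarith
  have hR : (0:ℝ) < ‖x‖ := lt_trans hr0 h2
  have hx0 : x ≠ 0 := by intro h; rw [h, norm_zero] at hR; exact lt_irrefl _ hR
  have hs₀ : (0:ℝ) < ‖x‖ - r := by linarith
  have hwx : (fun y : En n => wFun n C₀ lam y t) = (fun y : En n => C₀ * gFun n (‖y‖ - r)) :=
    rfl
  have hGf2 : ContDiff ℝ 2 (Gf n) := by
    unfold Gf
    exact (contDiff_const.sub (Real.contDiff_exp.comp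
      ((contDiff_const.mul contDiff_id).neg))).div_const _
  -- spatial smoothness
  have hspace : ContDiffAt ℝ 2 (fun y => wFun n C₀ lam y t) x := by
    rw [hwx]
    have hΦ : ContDiffAt ℝ 2 (fun y : En n => C₀ * Gf n (‖y‖ - r)) x :=
      contDiffAt_const.mul (hGf2.contDiffAt.comp x
        ((contDiffAt_norm ℝ hx0).sub contDiffAt_const))
    refine hΦ.congr_of_eventuallyEq ?_
    have hU : IsOpen {z : En n | r < ‖z‖} := isOpen_lt continuous_const continuous_norm
    filter_upwards [hU.mem_nhds h2] with z hz
    have hz' : (0:ℝ) ≤ ‖z‖ - r := by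
      have : r < ‖z‖ := hz
      linarith
    simp [gFun, Gf, hz']
  -- time regularity
  have hcont : Continuous (fun s : ℝ => ‖x‖ - rFun C₀ lam s) := by
    unfold rFun; continuity
  have hev : ∀ᶠ s in nhds t, 0 < ‖x‖ - rFun C₀ lam s := by
    have := hcont.continuousAt (x := t).eventually_mem
      (isOpen_Ioi.mem_nhds (show ‖x‖ - rFun C₀ lam t ∈ Ioi (0:ℝ) from hs₀))
    simpa [Set.mem_Ioi] using this
  have hWev : (fun s => wFun n C₀ lam x s) =ᶠ[nhds t]
      (fun s => C₀ * Gf n (‖x‖ - rFun C₀ lam s)) := by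
    filter_upwards [hev] with s hs
    simp [wFun, gFun, Gf, le_of_lt hs]
  have htime : ContDiffAt ℝ 1 (fun s => wFun n C₀ lam x s) t := by
    have hin : ContDiff ℝ 1 (fun s : ℝ => ‖x‖ - rFun C₀ lam s) := by
      unfold rFun
      exact contDiff_const.sub (contDiff_const.sub (contDiff_const.mul contDiff_id))
    exact (contDiffAt_const.mul (((hGf2.of_le (by norm_num)).comp hin).contDiffAt)).congr_of_eventuallyEq hWev
  -- time derivative
  have hlin : HasDerivAt (fun s : ℝ => ‖x‖ - rFun C₀ lam s) (C₀ * lam) t := by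
    unfold rFun
    have h := ((hasDerivAt_id t).const_mul (C₀ * lam))
    have h' := (hasDerivAt_const t (1:ℝ)).fun_sub h
    have h'' := (hasDerivAt_const t (‖x‖:ℝ)).fun_sub h'
    simpa using h''
  have hcomp := ((hasDerivAt_Gf n hn (‖x‖ - r)).comp t (by exact hlin)).const_mul C₀
  simp only [Function.comp_def] at hcomp
  have hdt : deriv (fun s => wFun n C₀ lam x s) t =
      C₀ * (Real.exp (-(2 * n * (‖x‖ - r))) * (C₀ * lam)) := by
    rw [hWev.deriv_eq]
    exact hcomp.deriv
  -- Pucci bound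
  have htr := trace_hessian hn C₀ r hr0 x h2
  have hexp_pos : (0:ℝ) < Real.exp (-(2 * n * (‖x‖ - r))) := Real.exp_pos _
  have hinv2 : ‖x‖⁻¹ ≤ 2 := by
    have hmul : ‖x‖⁻¹ * ‖x‖ = 1 := inv_mul_cancel₀ hR.ne'
    have hip : 0 < ‖x‖⁻¹ := inv_pos.2 hR
    nlinarith
  have htr_le : (hessian n (fun y => wFun n C₀ lam y t) x).trace ≤ 0 := by
    rw [hwx, htr]
    have hfac : (n:ℝ) * ‖x‖⁻¹ - 2 * n - ‖x‖⁻¹ ≤ 0 := by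
      have hinv0 : (0:ℝ) ≤ ‖x‖⁻¹ := by positivity
      nlinarith
    exact mul_nonpos_of_nonneg_of_nonpos (by positivity) hfac
  have hpucci : PucciMinus n K (hessian n (fun y => wFun n C₀ lam y t) x) ≤ 0 := by
    refine le_trans (pucciMinus_le hK _) ?_
    have : (0:ℝ) ≤ K⁻¹ := by positivity
    exact mul_nonpos_of_nonneg_of_nonpos this htr_le
  have hderivg : deriv (gFun n) (‖x‖ - r) = Real.exp (-(2 * n * (‖x‖ - r))) :=
    deriv_gFun n hn hs₀
  refine ⟨hspace, htime, ?_, ?_⟩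
  · rw [hdt, hderivg]
    have hterm : (0:ℝ) ≤ 4 * n * K * (C₀ * Real.exp (-(2 * n * (‖x‖ - r)))) := by
      positivity
    nlinarith [hpucci]
  · intro hx2 ht0 ht1
    rw [hderivg]
    have hCl : (0:ℝ) < C₀ * lam := by positivity
    have hs1 : ‖x‖ - r ≤ 1 + C₀ * lam := by
      rw [hrdef]
      unfold rFun
      nlinarith
    constructor
    · apply Real.exp_le_exp.2
      have h2n : (0:ℝ) ≤ 2 * (n:ℝ) := by positivity
      have := mul_le_mul_of_nonneg_left hs1 h2n
      linarith
    · rw [← Real.exp_zero]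
      apply Real.exp_le_exp.2
      have : (0:ℝ) ≤ 2 * (n:ℝ) * (‖x‖ - r) := by positivity
      linarith
end
end
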